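/- The stick-breaking weights of the Pitman-Yor process sum to one almost surely: if V_j are independent Beta(1-σ, ϑ+jσ) random variables with σ ∈ [0,1), ϑ > -σ, and p_j = V_j ∏_{l<j}(1-V_l), then Σ_{j=1}^∞ p_j = 1 almost surely. -/

import Mathlib

/-!
With `P_n = ∏_{l ≤ n} (1 - V_l)`, the partial sums of the weights telescope to `1 - P_n`, so it
suffices that `P_n → 0` almost surely. By independence `E[P_n] = ∏_{l ≤ n} (1 - E[V_l])
≤ exp (-∑_{l ≤ n} E[V_l])`, and `E[V_l] = (1 - σ) / (1 + ϑ + (l - 1) σ)` is of harmonic order, so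
`E[P_n] → 0`. As `P_n` decreases, its limit has expectation zero and hence vanishes almost surely.
-/

open MeasureTheory

/-- The law of a `Beta(a, b)` random variable, given by its density
`x ↦ Γ(a+b)/(Γ(a)Γ(b)) x^(a-1) (1-x)^(b-1)` on `(0,1)`. -/
noncomputable def betaLaw (a b : ℝ) : Measure ℝ :=
  (volume.restrict (Set.Ioo (0 : ℝ) 1)).withDensity
    (fun x => ENNReal.ofReal ((Real.Gamma (a + b) / (Real.Gamma a * Real.Gamma b)) *
      x ^ (a - 1) * (1 - x) ^ (b - 1)))

open Real Filter ProbabilityTheory Finset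
open scoped ENNReal Topology

theorem betaLaw_eq_betaMeasure (a b : ℝ) : betaLaw a b = betaMeasure a b := by
  rw [betaLaw, betaMeasure, ← withDensity_indicator measurableSet_Ioo]
  congr 1
  ext x
  by_cases hx : 0 < x ∧ x < 1 <;> simp [Set.indicator, betaPDF_eq, beta, hx]

theorem measurable_betaPDF (a b : ℝ) : Measurable (betaPDF a b) :=
  (measurable_betaPDFReal a b).ennreal_ofReal

theorem ae_mem_Ioo_betaMeasure (a b : ℝ) : ∀ᵐ x ∂betaMeasure a b, x ∈ Set.Ioo 0 1 := by
  rw [← betaLaw_eq_betaMeasure]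
  exact (withDensity_absolutelyContinuous _ _).ae_le (ae_restrict_mem measurableSet_Ioo)

theorem beta_add_one_left {a b : ℝ} (ha : 0 < a) (hb : 0 < b) :
    beta (a + 1) b = a / (a + b) * beta a b := by
  have := Real.Gamma_pos_of_pos (add_pos ha hb)
  rw [beta, beta, Real.Gamma_add_one ha.ne', add_right_comm, Real.Gamma_add_one (by positivity)]
  field_simp

theorem betaPDF_mul_ofReal {a b : ℝ} (ha : 0 < a) (hb : 0 < b) (x : ℝ) :
    betaPDF a b x * ENNReal.ofReal x = ENNReal.ofReal (a / (a + b)) * betaPDF (a + 1) b x := by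
  by_cases hx : 0 < x ∧ x < 1
  · have := beta_pos ha hb
    have hx0 : x ≠ 0 := hx.1.ne'
    rw [betaPDF_of_pos_lt_one hx.1 hx.2, betaPDF_of_pos_lt_one hx.1 hx.2,
      ← ENNReal.ofReal_mul' hx.1.le, ← ENNReal.ofReal_mul (by positivity),
      beta_add_one_left ha hb, add_sub_cancel_right, Real.rpow_sub_one hx0]
    congr 1
    field_simp
  · simp [betaPDF_eq, hx]

theorem lintegral_ofReal_betaMeasure {a b : ℝ} (ha : 0 < a) (hb : 0 < b) :
    ∫⁻ x, ENNReal.ofReal x ∂betaMeasure a b = ENNReal.ofReal (a / (a + b)) := by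
  rw [betaMeasure, lintegral_withDensity_eq_lintegral_mul _ (measurable_betaPDF a b)
    ENNReal.measurable_ofReal]
  simp only [Pi.mul_apply, betaPDF_mul_ofReal ha hb]
  rw [lintegral_const_mul _ (measurable_betaPDF _ b), lintegral_betaPDF_eq_one (by linarith) hb,
    mul_one]

theorem integral_id_betaMeasure {a b : ℝ} (ha : 0 < a) (hb : 0 < b) :
    ∫ x, x ∂betaMeasure a b = a / (a + b) := by
  rw [integral_eq_lintegral_of_nonneg_ae ((ae_mem_Ioo_betaMeasure a b).mono fun x hx => hx.1.le)
    aestronglyMeasurable_id, lintegral_ofReal_betaMeasure ha hb,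
    ENNReal.toReal_ofReal (by positivity)]

theorem sum_range_mul_prod_one_sub {R : Type*} [CommRing R] (w : ℕ → R) (n : ℕ) :
    ∑ j ∈ range n, w j * ∏ l ∈ range j, (1 - w l) = 1 - ∏ j ∈ range n, (1 - w j) := by
  induction n with
  | zero => simp
  | succ n ih => rw [sum_range_succ, ih, prod_range_succ]; ring

theorem hasSum_mul_prod_one_sub {w : ℕ → ℝ} (hw : ∀ j, w j ∈ Set.Icc 0 1)
    (hprod : Tendsto (fun n => ∏ j ∈ range n, (1 - w j)) atTop (𝓝 0)) :
    HasSum (fun j => w j * ∏ l ∈ range j, (1 - w l)) 1 := by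
  have hnonneg : ∀ j, 0 ≤ w j * ∏ l ∈ range j, (1 - w l) := fun j =>
    mul_nonneg (hw j).1 (prod_nonneg fun l _ => sub_nonneg.2 (hw l).2)
  rw [hasSum_iff_tendsto_nat_of_nonneg hnonneg]
  simp_rw [sum_range_mul_prod_one_sub]
  simpa using hprod.const_sub 1

theorem tendsto_prod_range_one_sub_zero {x : ℕ → ℝ} (hx : ∀ j, x j ≤ 1)
    (hsum : Tendsto (fun n => ∑ j ∈ range n, x j) atTop atTop) :
    Tendsto (fun n => ∏ j ∈ range n, (1 - x j)) atTop (𝓝 0) := by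
  refine squeeze_zero (fun n => prod_nonneg fun j _ => sub_nonneg.2 (hx j)) (fun n => ?_)
    (tendsto_exp_neg_atTop_nhds_zero.comp hsum)
  calc ∏ j ∈ range n, (1 - x j) ≤ ∏ j ∈ range n, exp (-x j) :=
        prod_le_prod (fun j _ => sub_nonneg.2 (hx j)) fun j _ => one_sub_le_exp_neg _
    _ = exp (-∑ j ∈ range n, x j) := by rw [← exp_sum, sum_neg_distrib]

theorem tendsto_sum_range_inv_add_mul_atTop {α β : ℝ} (hα : 0 < α) (hβ : 0 ≤ β) :
    Tendsto (fun n => ∑ j ∈ range n, (α + j * β)⁻¹) atTop atTop := by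
  refine tendsto_atTop_mono (fun n => ?_) (tendsto_sum_range_one_div_nat_succ_atTop.const_mul_atTop
    (inv_pos.2 (add_pos_of_pos_of_nonneg hα hβ)))
  rw [mul_sum]
  refine sum_le_sum fun j _ => ?_
  rw [← one_div, div_mul_div_comm, one_mul, one_div]
  gcongr
  nlinarith [(Nat.cast_nonneg j : (0 : ℝ) ≤ j)]

theorem prod_Icc_one_eq_prod_range_succ {M : Type*} [CommMonoid M] (f : ℕ → M) (n : ℕ) :
    ∏ l ∈ Icc 1 n, f l = ∏ l ∈ range n, f (l + 1) := by
  rw [range_eq_Ico, prod_Ico_add', zero_add, Ico_add_one_right_eq_Icc]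

section Probability

variable {Ω : Type*} [MeasurableSpace Ω] {μ : Measure Ω}

theorem lintegral_ofReal_one_sub [IsProbabilityMeasure μ] {X : Ω → ℝ} (hX : Integrable X μ)
    (h1 : ∀ᵐ ω ∂μ, X ω ≤ 1) :
    ∫⁻ ω, ENNReal.ofReal (1 - X ω) ∂μ = ENNReal.ofReal (1 - μ[X]) := by
  have hint : Integrable (fun ω => 1 - X ω) μ := (integrable_const 1).sub hX
  rw [← ofReal_integral_eq_lintegral_ofReal hint (h1.mono fun ω h => sub_nonneg.2 h),
    integral_sub (integrable_const 1) hX, integral_const, probReal_univ, one_smul]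

theorem ae_iInf_eq_zero_of_tendsto_lintegral {f : ℕ → Ω → ℝ≥0∞} (hf : ∀ n, Measurable (f n))
    (hlim : Tendsto (fun n => ∫⁻ ω, f n ω ∂μ) atTop (𝓝 0)) :
    ∀ᵐ ω ∂μ, ⨅ n, f n ω = 0 := by
  refine (lintegral_eq_zero_iff (Measurable.iInf hf)).1 (le_antisymm ?_ zero_le)
  exact ge_of_tendsto hlim (Eventually.of_forall fun n => lintegral_mono fun ω => iInf_le _ n)

theorem ae_tendsto_prod_range_one_sub_zero [IsProbabilityMeasure μ] {W : ℕ → Ω → ℝ}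
    (hindep : iIndepFun W μ) (hmeas : ∀ j, Measurable (W j))
    (hW : ∀ j, ∀ᵐ ω ∂μ, W j ω ∈ Set.Icc 0 1)
    (hsum : Tendsto (fun n => ∑ j ∈ range n, μ[W j]) atTop atTop) :
    ∀ᵐ ω ∂μ, Tendsto (fun n => ∏ j ∈ range n, (1 - W j ω)) atTop (𝓝 0) := by
  set f : ℕ → Ω → ℝ≥0∞ := fun j ω => ENNReal.ofReal (1 - W j ω)
  have hf : ∀ j, Measurable (f j) := fun j => (measurable_const.sub (hmeas j)).ennreal_ofReal
  have hint : ∀ j, Integrable (W j) μ := fun j =>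
    Integrable.of_mem_Icc 0 1 (hmeas j).aemeasurable (hW j)
  have hmean_le : ∀ j, μ[W j] ≤ 1 := fun j => by
    simpa using integral_mono_ae (hint j) (integrable_const (1 : ℝ)) ((hW j).mono fun ω h => h.2)
  have hlintegral : ∀ n, ∫⁻ ω, ∏ j ∈ range n, f j ω ∂μ
      = ENNReal.ofReal (∏ j ∈ range n, (1 - μ[W j])) := fun n => by
    rw [lintegral_prod_eq_prod_lintegral_of_indepFun _ f
      (hindep.comp _ fun _ => (measurable_const.sub measurable_id).ennreal_ofReal) hf,
      ENNReal.ofReal_prod_of_nonneg fun j _ => sub_nonneg.2 (hmean_le j)]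
    exact prod_congr rfl fun j _ => lintegral_ofReal_one_sub (hint j) ((hW j).mono fun ω h => h.2)
  have hinf : ∀ᵐ ω ∂μ, ⨅ n, ∏ j ∈ range n, f j ω = 0 := ae_iInf_eq_zero_of_tendsto_lintegral
    (fun n => Finset.measurable_prod _ fun j _ => hf j) (by
      simp_rw [hlintegral]
      simpa using ENNReal.tendsto_ofReal (tendsto_prod_range_one_sub_zero hmean_le hsum))
  filter_upwards [hinf, ae_all_iff.2 hW] with ω hω hWω
  have hanti : Antitone fun n => ∏ j ∈ range n, f j ω := antitone_nat_of_succ_le fun n => by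
    rw [prod_range_succ]
    exact mul_le_of_le_one_right' (ENNReal.ofReal_le_one.2 (by linarith [(hWω n).1]))
  refine ((ENNReal.tendsto_toReal ENNReal.zero_ne_top).comp
    (hω ▸ tendsto_atTop_iInf hanti)).congr fun n => ?_
  simp only [Function.comp_apply, ENNReal.toReal_prod, f,
    ENNReal.toReal_ofReal (sub_nonneg.2 (hWω _).2)]

end Probability

/-- The stick-breaking weights of the Pitman-Yor process sum to one almost surely. -/
theorem py_stick_breaking_weights_sum_to_one
    {Ω : Type*} [MeasurableSpace Ω] (μ : Measure Ω) [IsProbabilityMeasure μ]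
    (σ ϑ : ℝ) (hσ0 : 0 ≤ σ) (hσ1 : σ < 1) (hϑ : -σ < ϑ)
    (V : ℕ → Ω → ℝ)
    (hindep : ProbabilityTheory.iIndepFun V μ)
    (hmeas : ∀ j, Measurable (V j))
    (hlaw : ∀ j : ℕ, 1 ≤ j → μ.map (V j) = betaLaw (1 - σ) (ϑ + j * σ)) :
    ∀ᵐ ω ∂μ, ∑' j : ℕ, (V (j + 1) ω * ∏ l ∈ Finset.Icc 1 j, (1 - V l ω)) = 1 := by
  set W : ℕ → Ω → ℝ := fun j => V (j + 1)
  have hb : ∀ j : ℕ, 0 < ϑ + ((j + 1 : ℕ) : ℝ) * σ := fun j => by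
    push_cast; nlinarith [(Nat.cast_nonneg j : (0 : ℝ) ≤ j)]
  have hlawW : ∀ j, μ.map (W j) = betaMeasure (1 - σ) (ϑ + ((j + 1 : ℕ) : ℝ) * σ) := fun j => by
    rw [hlaw (j + 1) (Nat.le_add_left 1 j), betaLaw_eq_betaMeasure]
  have hW : ∀ j, ∀ᵐ ω ∂μ, W j ω ∈ Set.Icc 0 1 := fun j =>
    ae_of_ae_map (hmeas _).aemeasurable
      (hlawW j ▸ (ae_mem_Ioo_betaMeasure _ _).mono fun x hx => Set.Ioo_subset_Icc_self hx)
  have hmean : ∀ j : ℕ, μ[W j] = (1 - σ) * (1 + ϑ + j * σ)⁻¹ := fun j => by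
    rw [← integral_map (φ := W j) (hmeas _).aemeasurable (f := fun x => x)
      aestronglyMeasurable_id, hlawW j, integral_id_betaMeasure (by linarith) (hb j),
      div_eq_mul_inv]
    push_cast; ring_nf
  have hsum : Tendsto (fun n => ∑ j ∈ range n, μ[W j]) atTop atTop := by
    simp_rw [hmean, ← mul_sum]
    exact (tendsto_sum_range_inv_add_mul_atTop (by linarith) hσ0).const_mul_atTop (by linarith)
  filter_upwards [ae_tendsto_prod_range_one_sub_zero (hindep.precomp (add_left_injective 1))
    (fun j => hmeas _) hW hsum, ae_all_iff.2 hW] with ω hprod hWω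
  simp_rw [prod_Icc_one_eq_prod_range_succ]
  exact (hasSum_mul_prod_one_sub hWω hprod).tsum_eq
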